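/- Let φ be a CLTL formula over (ℤ, <, =) of X-length k defining the winning condition of a single-sided CLTL game (the environment owns only future-blind variables, EV ⊆ V^b). Then the system player has a winning strategy in this game if and only if there exists a winning strategy tree (T, L). -/

import Mathlib

/-- The gap function (with ceiling `c`) associated with a mapping `m` on a finite set of
variables: enumerating the variables as `x_0, x_1, …` sorted by `m`-values, `gp x_0 = 0` and
`gp x_{l+1} = gp x_l + min (m x_{l+1} - m x_l) c`.  Equivalently (closed form used here),
`gp x` is the sum, over the distinct values `v` of `m` below `m x`, of
`min (next value above v - v) c`. -/
noncomputable def gapFun {V : Type} [Fintype V] (c : ℕ) (m : V → ℤ) (x : V) : ℕ :=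
  ∑ v ∈ (Finset.univ.image m).filter (fun w => w < m x),
    min ((((Finset.univ.image m).filter (fun w => v < w)).min.untopD v) - v).toNat c
/-- Data of a frame over look-ahead variables `Va` and future-blind variables `Vb`: a binary
relation on look-ahead terms `X^j y` (encoded as pairs `(j, y) : ℕ × Va`) together with, for
each position offset `j`, a candidate gap function `Vb → ℕ`.  For an `s`-frame only the
indices `j < s` are relevant. -/
abbrev FrameData (Va Vb : Type) := (ℕ × Va → ℕ × Va → Prop) × (ℕ → Vb → ℕ)
/-- The symbolic model `μ(σ)` associated with a concrete model `σ` (for `X`-length `k`):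
its `i`-th frame is the `min (i+1) (k+1)`-frame whose pre-order is induced by the valuations
at positions `i - min i k, …, i` (the term `X^j y` denoting the value of `y` at position
`i - min i k + j`; indices are clamped to the valid range) and whose `j`-th gap function is
the gap function associated with the future-blind part of position `i - min i k + j`. -/
noncomputable def mu {Va Vb : Type} [Fintype Vb] (k : ℕ)
    (σ : ℕ → Va ⊕ Vb → ℤ) : ℕ → FrameData Va Vb :=
  fun i =>
    (fun t1 t2 =>
        σ (i - min i k + min t1.1 (min i k)) (Sum.inl t1.2) ≤
          σ (i - min i k + min t2.1 (min i k)) (Sum.inl t2.2),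
     fun j => gapFun (Fintype.card Vb - 1)
        (fun b => σ (i - min i k + min j (min i k)) (Sum.inr b)))
/-- Constraint LTL formulas over look-ahead variables `Va` and future-blind variables `Vb`
for the constraint system `(D, <, =)`.  Atomic constraints compare two look-ahead terms
`X^i x`, `X^j y` (`x, y ∈ Va`) or two future-blind variables (`∈ Vb`). -/
inductive CLTL (Va Vb : Type) : Type
  | ltL : ℕ → Va → ℕ → Va → CLTL Va Vb
  | eqL : ℕ → Va → ℕ → Va → CLTL Va Vb
  | ltB : Vb → Vb → CLTL Va Vb
  | eqB : Vb → Vb → CLTL Va Vb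
  | not : CLTL Va Vb → CLTL Va Vb
  | or : CLTL Va Vb → CLTL Va Vb → CLTL Va Vb
  | next : CLTL Va Vb → CLTL Va Vb
  | untl : CLTL Va Vb → CLTL Va Vb → CLTL Va Vb

/-- The `X`-length of a CLTL formula: the maximal `i` such that a look-ahead term `X^i y`
occurs in it (a formula "is of `X`-length `k`" iff its `xlen` is at most `k`). -/
def xlen {Va Vb : Type} : CLTL Va Vb → ℕ
  | .ltL i _ j _ => max i j
  | .eqL i _ j _ => max i j
  | .ltB _ _ => 0
  | .eqB _ _ => 0
  | .not φ => xlen φ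
  | .or φ ψ => max (xlen φ) (xlen ψ)
  | .next φ => xlen φ
  | .untl φ ψ => max (xlen φ) (xlen ψ)

/-- Concrete semantics of CLTL over a linearly ordered domain `D`:
`csat σ i φ` means `σ, i ⊨ φ`. -/
def csat {Va Vb D : Type} [LinearOrder D] (σ : ℕ → Va ⊕ Vb → D) :
    ℕ → CLTL Va Vb → Prop
  | i, .ltL i1 x j1 y => σ (i + i1) (Sum.inl x) < σ (i + j1) (Sum.inl y)
  | i, .eqL i1 x j1 y => σ (i + i1) (Sum.inl x) = σ (i + j1) (Sum.inl y)
  | i, .ltB x y => σ i (Sum.inr x) < σ i (Sum.inr y)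
  | i, .eqB x y => σ i (Sum.inr x) = σ i (Sum.inr y)
  | i, .not φ => ¬ csat σ i φ
  | i, .or φ ψ => csat σ i φ ∨ csat σ i ψ
  | i, .next φ => csat σ (i + 1) φ
  | i, .untl φ ψ => ∃ j, i ≤ j ∧ csat σ j ψ ∧ ∀ l, i ≤ l → l < j → csat σ l φ

/-- Symbolic semantics of CLTL on a sequence of frames: `ssat ρ i φ` means `ρ, i ⊨_s φ`.
A look-ahead constraint is checked against the pre-order of the `i`-th frame, a future-blind
constraint against the gap function of the `i`-th frame at offset `0`. -/
def ssat {Va Vb : Type} (ρ : ℕ → FrameData Va Vb) : ℕ → CLTL Va Vb → Prop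
  | i, .ltL i1 x j1 y => (ρ i).1 (i1, x) (j1, y) ∧ ¬ (ρ i).1 (j1, y) (i1, x)
  | i, .eqL i1 x j1 y => (ρ i).1 (i1, x) (j1, y) ∧ (ρ i).1 (j1, y) (i1, x)
  | i, .ltB x y => (ρ i).2 0 x < (ρ i).2 0 y
  | i, .eqB x y => (ρ i).2 0 x = (ρ i).2 0 y
  | i, .not φ => ¬ ssat ρ i φ
  | i, .or φ ψ => ssat ρ i φ ∨ ssat ρ i ψ
  | i, .next φ => ssat ρ (i + 1) φ
  | i, .untl φ ψ => ∃ j, i ≤ j ∧ ssat ρ j ψ ∧ ∀ l, i ≤ l → l < j → ssat ρ l φ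
/-- A system strategy in a (single-sided) CLTL game: given the history of full valuation
rounds and the environment's choice for its variables `E ⊆ Vb` in the current round, it
produces the full valuation of the current round (its values on the environment variables
are required to copy the environment's choice, see `EnvFaithful`). -/
def Strat (Va Vb : Type) (E : Finset Vb) : Type :=
  List (Va ⊕ Vb → ℤ) → ({x : Vb // x ∈ E} → ℤ) → (Va ⊕ Vb → ℤ)

/-- The strategy never alters the environment's choices for the environment variables. -/
def EnvFaithful {Va Vb : Type} (E : Finset Vb) (st : Strat Va Vb E) : Prop :=
  ∀ (h : List (Va ⊕ Vb → ℤ)) (em : {x : Vb // x ∈ E} → ℤ) (x : Vb) (hx : x ∈ E),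
    st h em (Sum.inr x) = em ⟨x, hx⟩

/-- The concrete model `σ` results from a play in which the system plays according to the
strategy `st` (the environment's choices in round `i` being the restriction of `σ i` to the
environment variables). -/
def Conforms {Va Vb : Type} (E : Finset Vb) (st : Strat Va Vb E)
    (σ : ℕ → Va ⊕ Vb → ℤ) : Prop :=
  ∀ i : ℕ, σ i =
    st (List.ofFn fun j : Fin i => σ j.val) (fun e => σ i (Sum.inr e.val))
/-- The set `G` of gap functions associated with mappings of the environment variables
`E ⊆ Vb` to `ℤ` (with ceiling `|Vb| - 1`), as a type. -/
def GapFuns (Vb : Type) [Fintype Vb] (E : Finset Vb) : Type :=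
  {g : {x : Vb // x ∈ E} → ℕ //
    ∃ em : {x : Vb // x ∈ E} → ℤ, g = gapFun (Fintype.card Vb - 1) em}

/-- The size of the frame labelling a tree node `η`: `min |η| (k+1)`. -/
def nsize {α : Type} (k : ℕ) (η : List α) : ℕ := min η.length (k + 1)

/-- `f` is (the data of) an `s`-frame: its relation is a total pre-order on the look-ahead
terms with index `< s`, and for each `j < s` its `j`-th gap data is the gap function
associated with some mapping `Vb → ℤ`. -/
def IsFrameAt {Va Vb : Type} [Fintype Vb] (s : ℕ) (f : FrameData Va Vb) : Prop :=
  (∀ t1 t2 : ℕ × Va, t1.1 < s → t2.1 < s → (f.1 t1 t2 ∨ f.1 t2 t1)) ∧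
  (∀ t1 t2 t3 : ℕ × Va, t1.1 < s → t2.1 < s → t3.1 < s →
    f.1 t1 t2 → f.1 t2 t3 → f.1 t1 t3) ∧
  (∀ j < s, ∃ m : Vb → ℤ, f.2 j = gapFun (Fintype.card Vb - 1) m)

/-- One-step compatibility (for `X`-length `k`) between an `s`-frame `f` and the frame `g`
following it: if `s < k + 1` then `g` is an `(s+1)`-frame and the two frames agree on the
shared terms/offsets `< s`; otherwise both are `(k+1)`-frames and `g` is `f` shifted one
step to the left. -/
def OneStepT {Va Vb : Type} (k s : ℕ) (f g : FrameData Va Vb) : Prop :=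
  if s < k + 1 then
    (∀ t1 t2 : ℕ × Va, t1.1 < s → t2.1 < s → (f.1 t1 t2 ↔ g.1 t1 t2)) ∧
    (∀ j < s, f.2 j = g.2 j)
  else
    (∀ t1 t2 : ℕ × Va, t1.1 + 1 < k + 1 → t2.1 + 1 < k + 1 →
      (f.1 (t1.1 + 1, t1.2) (t2.1 + 1, t2.2) ↔ g.1 t1 t2)) ∧
    (∀ j : ℕ, j + 1 < k + 1 → f.2 (j + 1) = g.2 j)

/-- Gap compatibility between a gap function `g ∈ G` (for the environment variables) and an
`s`-frame `fr`: the gaps `fr` imposes between environment variables at its last offset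
`s - 1` are the gaps imposed by `g`. -/
def GapCompat {Va Vb : Type} [Fintype Vb] {E : Finset Vb}
    (g : GapFuns Vb E) (s : ℕ) (fr : FrameData Va Vb) : Prop :=
  ∀ x y : {x : Vb // x ∈ E},
    (g.val x : ℤ) - (g.val y : ℤ) =
      (fr.2 (s - 1) x.val : ℤ) - (fr.2 (s - 1) y.val : ℤ)

/-- A strategy tree (for `X`-length `k`): a `|G|`-branching tree whose nodes are labelled
with frames, the node `η` carrying a `min |η| (k+1)`-frame, such that each parent/child pair
is one-step compatible and each child is gap compatible with the gap function labelling the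
edge leading to it. -/
def StrategyTree {Va Vb : Type} [Fintype Vb] (E : Finset Vb) (k : ℕ)
    (T : List (GapFuns Vb E) → FrameData Va Vb) : Prop :=
  ∀ η : List (GapFuns Vb E),
    IsFrameAt (nsize k η) (T η) ∧
    ∀ g : GapFuns Vb E,
      OneStepT k (nsize k η) (T η) (T (η ++ [g])) ∧
      GapCompat g (nsize k (η ++ [g])) (T (η ++ [g]))

/-- The node at depth `i + 1` along the infinite path `π` of a tree. -/
def pathNodes {α : Type} (π : ℕ → α) (i : ℕ) : List α :=
  List.ofFn fun j : Fin (i + 1) => π j.val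

/-- Two frame data agree as `s`-frames: same pre-order on terms with index `< s` and same
gap functions at offsets `< s`. -/
def FrameAgree {Va Vb : Type} (s : ℕ) (f g : FrameData Va Vb) : Prop :=
  (∀ t1 t2 : ℕ × Va, t1.1 < s → t2.1 < s → (f.1 t1 t2 ↔ g.1 t1 t2)) ∧
  (∀ j < s, f.2 j = g.2 j)

/-- `(T, L)` is a winning strategy tree for the winning condition `φ` (of `X`-length `k`):
`T` is a strategy tree, and along every infinite path `π` the frame sequence `T(π)` is the
symbolic model associated with the concrete model `L(π)` and symbolically satisfies `φ` at
position `k`. -/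
def WinningStrategyTree {Va Vb : Type} [Fintype Vb] (E : Finset Vb) (k : ℕ)
    (φ : CLTL Va Vb) (T : List (GapFuns Vb E) → FrameData Va Vb)
    (L : List (GapFuns Vb E) → (Va ⊕ Vb → ℤ)) : Prop :=
  StrategyTree E k T ∧
  ∀ π : ℕ → GapFuns Vb E,
    (∀ i : ℕ, FrameAgree (min (i + 1) (k + 1)) (T (pathNodes π i))
      (mu k (fun j => L (pathNodes π j)) i)) ∧
    ssat (fun i => T (pathNodes π i)) k φ

/-! Satisfaction of a formula of `X`-length `k` depends only on the look-ahead values of a model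
and, position by position, on the order of its future-blind values; from position `k` on, the
symbolic model `μ(σ)` records exactly this, so `σ, 0 ⊨ φ` iff `μ(σ), k ⊨_s φ`. A strategy thus
yields a tree by playing it along every branch, the environment realising each gap function by
some move, and a tree yields a strategy by following the gap functions of the environment's
moves. In both directions the future-blind values of a round have to be re-embedded, preserving
their order, so that the gaps recorded between environment variables are those of the
environment's move. This is done by attaching every variable to the nearest environment
variable below it (its anchor) and translating each such block rigidly; a block never needs
more room than `|V^b| - 1`, the ceiling of the gap functions. -/

section GapFun

variable {V : Type} [Fintype V] {c : ℕ} {m : V → ℤ} {x y : V}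

def IsNextValue (m : V → ℤ) (x y : V) : Prop :=
  m x < m y ∧ ∀ z, ¬(m x < m z ∧ m z < m y)

lemma exists_isNextValue_of_lt (h : m x < m y) : ∃ z, IsNextValue m x z ∧ m z ≤ m y := by
  obtain ⟨z, hz, hmin⟩ := (Finset.univ.filter fun z => m x < m z).exists_min_image m
    ⟨y, by simpa using h⟩
  simp only [Finset.mem_filter, Finset.mem_univ, true_and] at hz hmin
  exact ⟨z, ⟨hz, fun w hw => (hmin w hw.1).not_gt hw.2⟩, hmin y h⟩

lemma exists_isNextValue_to_of_lt (h : m x < m y) : ∃ z, m x ≤ m z ∧ IsNextValue m z y := by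
  obtain ⟨z, hz, hmax⟩ := (Finset.univ.filter fun z => m z < m y).exists_max_image m
    ⟨x, by simpa using h⟩
  simp only [Finset.mem_filter, Finset.mem_univ, true_and] at hz hmax
  exact ⟨z, hmax x h, hz, fun w hw => (hmax w hw.2).not_gt hw.1⟩

lemma induction_isNextValue {P : V → Prop} (base : ∀ y, m y = m x → P y)
    (step : ∀ z y, m x ≤ m z → IsNextValue m z y → P z → P y) : ∀ y, m x ≤ m y → P y := by
  intro y hxy
  induction hd : (m y - m x).toNat using Nat.strong_induction_on generalizing y with
  | _ d ih =>
    rcases hxy.eq_or_lt with hxy | hxy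
    · exact base y hxy.symm
    · obtain ⟨z, hxz, hzy⟩ := exists_isNextValue_to_of_lt hxy
      exact step z y hxz hzy (ih _ (by have := hzy.1; omega) z hxz rfl)

lemma gapFun_congr (h : m x = m y) : gapFun c m x = gapFun c m y := by
  simp only [gapFun, h]

lemma gapFun_mono (h : m x ≤ m y) : gapFun c m x ≤ gapFun c m y :=
  Finset.sum_le_sum_of_subset fun v hv => by
    simp only [Finset.mem_filter] at hv ⊢
    exact ⟨hv.1, hv.2.trans_le h⟩

/-- The recursive definition of gap functions in the paper. -/
lemma gapFun_of_isNextValue (h : IsNextValue m x y) :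
    gapFun c m y = gapFun c m x + min (m y - m x).toNat c := by
  have hbelow : (Finset.univ.image m).filter (· < m y)
      = insert (m x) ((Finset.univ.image m).filter (· < m x)) := by
    ext v
    simp only [Finset.mem_filter, Finset.mem_insert, Finset.mem_image, Finset.mem_univ, true_and]
    constructor
    · rintro ⟨⟨z, rfl⟩, hz⟩
      rcases lt_or_ge (m z) (m x) with hzx | hzx
      · exact Or.inr ⟨⟨z, rfl⟩, hzx⟩
      · have := h.2 z
        exact Or.inl (by omega)
    · rintro (rfl | ⟨⟨z, rfl⟩, hz⟩)
      · exact ⟨⟨x, rfl⟩, h.1⟩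
      · exact ⟨⟨z, rfl⟩, hz.trans h.1⟩
  have hnext : ((Finset.univ.image m).filter (m x < ·)).min = m y := by
    refine le_antisymm (Finset.min_le (by simp [h.1])) (Finset.le_min fun v hv => ?_)
    simp only [Finset.mem_filter, Finset.mem_image, Finset.mem_univ, true_and] at hv
    obtain ⟨⟨z, rfl⟩, hz⟩ := hv
    have := h.2 z
    exact WithTop.coe_le_coe.2 (by omega)
  rw [gapFun, hbelow, Finset.sum_insert (by simp), hnext, WithTop.untopD_coe, add_comm]
  rfl

lemma gapFun_lt_gapFun (hc : 0 < c) (h : m x < m y) : gapFun c m x < gapFun c m y := by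
  obtain ⟨z, hxz, hzy⟩ := exists_isNextValue_of_lt h
  have := gapFun_mono (c := c) hzy
  rw [gapFun_of_isNextValue hxz] at this
  have := hxz.1
  omega

lemma one_lt_card_of_lt (h : m x < m y) : 1 < Fintype.card V :=
  Fintype.one_lt_card_iff.2 ⟨x, y, fun hxy => by simp [hxy] at h⟩

lemma gapFun_lt_gapFun_iff (hc : 0 < c ∨ Fintype.card V ≤ 1) :
    gapFun c m x < gapFun c m y ↔ m x < m y :=
  ⟨fun h => lt_of_not_ge fun hyx => (gapFun_mono hyx).not_gt h,
    fun h => gapFun_lt_gapFun (hc.resolve_right (one_lt_card_of_lt h).not_ge) h⟩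

lemma gapFun_le_gapFun_iff (hc : 0 < c ∨ Fintype.card V ≤ 1) :
    gapFun c m x ≤ gapFun c m y ↔ m x ≤ m y := by
  rw [← not_lt, gapFun_lt_gapFun_iff hc, not_lt]

lemma gapFun_inj_iff (hc : 0 < c ∨ Fintype.card V ≤ 1) :
    gapFun c m x = gapFun c m y ↔ m x = m y := by
  rw [le_antisymm_iff, le_antisymm_iff, gapFun_le_gapFun_iff hc, gapFun_le_gapFun_iff hc]

lemma gapFun_le : gapFun c m x ≤ c * (Fintype.card V - 1) := by
  have hcard : ((Finset.univ.image m).filter (· < m x)).card ≤ Fintype.card V - 1 := by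
    have hlt : ((Finset.univ.image m).filter (· < m x)).card < (Finset.univ.image m).card :=
      Finset.card_lt_card (Finset.filter_ssubset.2 ⟨m x, by simp⟩)
    have := (Finset.card_image_le (s := Finset.univ) (f := m)).trans_eq Finset.card_univ
    omega
  calc gapFun c m x ≤ ((Finset.univ.image m).filter (· < m x)).card * c :=
        Finset.sum_le_card_nsmul _ _ _ fun _ _ => min_le_right _ _
    _ ≤ c * (Fintype.card V - 1) := by rw [mul_comm]; exact Nat.mul_le_mul_left c hcard

lemma gapFun_sub_le (h : m x ≤ m y) : (gapFun c m y : ℤ) - gapFun c m x ≤ m y - m x := by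
  refine induction_isNextValue (P := fun y => (gapFun c m y : ℤ) - gapFun c m x ≤ m y - m x)
    (fun y hy => by simp [gapFun_congr (c := c) hy, hy]) (fun z y _ hzy hz => ?_) y h
  rw [gapFun_of_isNextValue hzy]
  have := hzy.1
  omega

lemma gapFun_sub_gapFun (hgap : ∀ x y, IsNextValue m x y → m y - m x ≤ c) (x y : V) :
    (gapFun c m y : ℤ) - gapFun c m x = m y - m x := by
  have key : ∀ x y, m x ≤ m y → (gapFun c m y : ℤ) - gapFun c m x = m y - m x := by
    intro x
    refine induction_isNextValue (fun y hy => by simp [gapFun_congr (c := c) hy, hy])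
      fun z y _ hzy hz => ?_
    rw [gapFun_of_isNextValue hzy]
    have := hgap z y hzy
    have := hzy.1
    omega
  rcases le_total (m x) (m y) with h | h
  · exact key x y h
  · have := key y x h
    omega

end GapFun

section Anchor

variable {V : Type} {E : Finset V}

lemma exists_anchor (hE : E.Nonempty) (m : V → ℤ) (x : V) : ∃ a : {y // y ∈ E},
    (∀ e ∈ E, m e ≤ m x → m e ≤ m a) ∧ (m a ≤ m x ∨ ∀ e ∈ E, m a ≤ m e) := by
  by_cases h : (E.filter fun e => m e ≤ m x).Nonempty
  · obtain ⟨a, ha, hmax⟩ := (E.filter fun e => m e ≤ m x).exists_max_image m h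
    simp only [Finset.mem_filter] at ha hmax
    exact ⟨⟨a, ha.1⟩, fun e he hex => hmax e ⟨he, hex⟩, Or.inl ha.2⟩
  · obtain ⟨a, ha, hmin⟩ := E.exists_min_image m hE
    exact ⟨⟨a, ha⟩, fun e he hex => (h ⟨e, by simp [he, hex]⟩).elim, Or.inr hmin⟩

noncomputable def anchor (hE : E.Nonempty) (m : V → ℤ) (x : V) : {y // y ∈ E} :=
  (exists_anchor hE m x).choose

variable {hE : E.Nonempty} {m : V → ℤ} {x y : V}

lemma le_anchor {e : V} (he : e ∈ E) (hex : m e ≤ m x) : m e ≤ m (anchor hE m x) :=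
  (exists_anchor hE m x).choose_spec.1 e he hex

lemma anchor_le_or (x : V) : m (anchor hE m x) ≤ m x ∨ ∀ e ∈ E, m (anchor hE m x) ≤ m e :=
  (exists_anchor hE m x).choose_spec.2

lemma anchor_mono (h : m x ≤ m y) : m (anchor hE m x) ≤ m (anchor hE m y) := by
  rcases anchor_le_or (hE := hE) (m := m) x with hx | hx
  · exact le_anchor (anchor hE m x).2 (hx.trans h)
  · exact hx _ (anchor hE m y).2

lemma anchor_of_mem {e : V} (he : e ∈ E) : m (anchor hE m e) = m e := by
  refine le_antisymm ?_ (le_anchor he le_rfl)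
  rcases anchor_le_or (hE := hE) (m := m) e with h | h
  exacts [h, h e he]

lemma anchor_isNextValue (h : IsNextValue m x y) (e : {y // y ∈ E}) :
    ¬(m (anchor hE m x) < m e ∧ m e < m (anchor hE m y)) := by
  rintro ⟨hxe, hey⟩
  rcases le_or_gt (m e) (m x) with hex | hxe'
  · exact (le_anchor e.2 hex).not_gt hxe
  · have hye : m y ≤ m e := not_lt.1 fun hey' => h.2 e ⟨hxe', hey'⟩
    rcases anchor_le_or (hE := hE) (m := m) y with hy | hy
    · omega
    · exact (hy e e.2).not_gt hey

/-- The variables sharing an anchor form a block, translated rigidly so that its anchor lands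
on `t`. The hypothesis `ht` of the lemmas below says that `t` spreads anchors at least as far
apart as `R` does, so the blocks stay in order. -/
noncomputable def anchorExtend (hE : E.Nonempty) (m : V → ℤ) (t : {y // y ∈ E} → ℤ)
    (R : V → ℤ) (x : V) : ℤ :=
  t (anchor hE m x) + (R x - R (anchor hE m x))

variable {t : {y // y ∈ E} → ℤ} {R : V → ℤ}

lemma anchorExtend_of_mem (hR : ∀ x y, R x ≤ R y ↔ m x ≤ m y)
    (ht : ∀ e f : {y // y ∈ E}, m e ≤ m f → R f - R e ≤ t f - t e) (e : {y // y ∈ E}) :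
    anchorExtend hE m t R e = t e := by
  have ha := anchor_of_mem (hE := hE) (m := m) e.2
  have h1 := ht _ _ ha.le
  have h2 := ht _ _ ha.ge
  have h3 := (hR (anchor hE m e) e).2 ha.le
  have h4 := (hR e (anchor hE m e)).2 ha.ge
  unfold anchorExtend
  omega

lemma sub_le_anchorExtend_sub
    (ht : ∀ e f : {y // y ∈ E}, m e ≤ m f → R f - R e ≤ t f - t e) (h : m x ≤ m y) :
    R y - R x ≤ anchorExtend hE m t R y - anchorExtend hE m t R x := by
  have := ht _ _ (anchor_mono (hE := hE) (m := m) h)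
  unfold anchorExtend
  omega

lemma anchorExtend_le_iff (hR : ∀ x y, R x ≤ R y ↔ m x ≤ m y)
    (ht : ∀ e f : {y // y ∈ E}, m e ≤ m f → R f - R e ≤ t f - t e) :
    anchorExtend hE m t R x ≤ anchorExtend hE m t R y ↔ m x ≤ m y := by
  refine ⟨fun h => ?_, fun h => ?_⟩
  · by_contra hyx
    have h1 := sub_le_anchorExtend_sub (hE := hE) ht (not_le.1 hyx).le
    have h2 := (hR x y).not.2 hyx
    omega
  · have h1 := sub_le_anchorExtend_sub (hE := hE) ht h
    have h2 := (hR x y).2 h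
    omega

lemma anchorExtend_sub_of_anchor_eq (hR : ∀ x y, R x ≤ R y ↔ m x ≤ m y)
    (ht : ∀ e f : {y // y ∈ E}, m e ≤ m f → R f - R e ≤ t f - t e)
    (h : m (anchor hE m x) = m (anchor hE m y)) :
    anchorExtend hE m t R y - anchorExtend hE m t R x = R y - R x := by
  have h1 := ht _ _ h.le
  have h2 := ht _ _ h.ge
  have h3 := (hR (anchor hE m x) (anchor hE m y)).2 h.le
  have h4 := (hR (anchor hE m y) (anchor hE m x)).2 h.ge
  unfold anchorExtend
  omega

end Anchor

lemma isNextValue_congr {V : Type} {m m' : V → ℤ} (h : ∀ x y, m' x ≤ m' y ↔ m x ≤ m y)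
    {x y : V} : IsNextValue m' x y ↔ IsNextValue m x y := by
  simp only [IsNextValue, ← not_le, h]

section Reembedding

variable {V : Type} [Fintype V]

lemma gapFun_one_sub_le_gapFun_subtype_sub (E : Finset V) (m : V → ℤ) (e f : {y // y ∈ E})
    (h : m e ≤ m f) :
    (gapFun 1 m f : ℤ) - gapFun 1 m e
      ≤ (gapFun (Fintype.card V - 1) (fun e : {y // y ∈ E} => m e) f : ℤ)
        - gapFun (Fintype.card V - 1) (fun e : {y // y ∈ E} => m e) e := by
  revert f
  refine induction_isNextValue (m := fun e : {y // y ∈ E} => m e) (fun f hf => ?_)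
    (fun g f _ hgf ih => ?_)
  · simp only [gapFun_congr (c := 1) (m := m) hf,
      gapFun_congr (m := fun e : {y // y ∈ E} => m e) hf, sub_self, le_refl]
  · have hstep := gapFun_of_isNextValue (c := Fintype.card V - 1) hgf
    have hlip := gapFun_sub_le (c := 1) (m := m) hgf.1.le
    have hle := gapFun_le (c := 1) (m := m) (x := f)
    have hgf' : m g < m f := hgf.1
    simp only [hstep] at ih ⊢
    omega

lemma exists_reembedding_gapFun_sub_eq (E : Finset V) (m : V → ℤ) :
    ∃ m' : V → ℤ, (∀ x y, m' x ≤ m' y ↔ m x ≤ m y) ∧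
      ∀ e f : {y // y ∈ E},
        (gapFun (Fintype.card V - 1) m' f : ℤ) - gapFun (Fintype.card V - 1) m' e
          = (gapFun (Fintype.card V - 1) (fun e : {y // y ∈ E} => m e) f : ℤ)
            - gapFun (Fintype.card V - 1) (fun e : {y // y ∈ E} => m e) e := by
  rcases E.eq_empty_or_nonempty with rfl | hE
  · exact ⟨m, fun _ _ => Iff.rfl, fun e => absurd e.2 (Finset.notMem_empty _)⟩
  set c := Fintype.card V - 1
  -- `gapFun 1 m` is the dense rank of `m`
  set R : V → ℤ := fun x => gapFun 1 m x
  set t : {y // y ∈ E} → ℤ := fun e => gapFun c (fun e : {y // y ∈ E} => m e) e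
  have hR : ∀ x y, R x ≤ R y ↔ m x ≤ m y :=
    fun x y => Nat.cast_le.trans (gapFun_le_gapFun_iff (Or.inl one_pos))
  have hRstep : ∀ x y, IsNextValue m x y → R y - R x = 1 := by
    intro x y h
    have := h.1
    simp only [R, gapFun_of_isNextValue h]
    omega
  have ht : ∀ e f : {y // y ∈ E}, m e ≤ m f → R f - R e ≤ t f - t e :=
    gapFun_one_sub_le_gapFun_subtype_sub E m
  refine ⟨anchorExtend hE m t R, fun x y => anchorExtend_le_iff hR ht, fun e f => ?_⟩
  rw [gapFun_sub_gapFun (m := anchorExtend hE m t R) _ e f, anchorExtend_of_mem hR ht,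
    anchorExtend_of_mem hR ht]
  -- it remains to see that the re-embedding never steps by more than `c`
  intro x y hxy
  rw [isNextValue_congr fun x y => anchorExtend_le_iff hR ht] at hxy
  have hc : 1 ≤ c := by
    have := one_lt_card_of_lt hxy.1
    omega
  rcases (anchor_mono (hE := hE) hxy.1.le).eq_or_lt with hxy' | hxy'
  · rw [anchorExtend_sub_of_anchor_eq hR ht hxy', hRstep x y hxy]
    exact_mod_cast hc
  · have hnext : IsNextValue (fun e : {y // y ∈ E} => m e) (anchor hE m x) (anchor hE m y) :=
      ⟨hxy', anchor_isNextValue hxy⟩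
    have htstep := gapFun_of_isNextValue (c := c) hnext
    have hRa := (hR (anchor hE m y) (anchor hE m x)).not.2 (not_le.2 hxy')
    have := hRstep x y hxy
    have := hxy.1
    simp only [anchorExtend, t, htstep] at *
    omega

lemma exists_reembedding_eq_on (E : Finset V) (m : V → ℤ) (em : {y // y ∈ E} → ℤ)
    (H : ∀ e f : {y // y ∈ E},
      (gapFun (Fintype.card V - 1) em f : ℤ) - gapFun (Fintype.card V - 1) em e
        = (gapFun (Fintype.card V - 1) m f : ℤ) - gapFun (Fintype.card V - 1) m e) :
    ∃ m' : V → ℤ, (∀ x y, m' x ≤ m' y ↔ m x ≤ m y) ∧ ∀ e : {y // y ∈ E}, m' e = em e := by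
  rcases E.eq_empty_or_nonempty with rfl | hE
  · exact ⟨m, fun _ _ => Iff.rfl, fun e => absurd e.2 (Finset.notMem_empty _)⟩
  set c := Fintype.card V - 1
  set R : V → ℤ := fun x => gapFun c m x
  have hR : ∀ x y, R x ≤ R y ↔ m x ≤ m y :=
    fun x y => Nat.cast_le.trans (gapFun_le_gapFun_iff (by omega))
  have ht : ∀ e f : {y // y ∈ E}, m e ≤ m f → R f - R e ≤ em f - em e := by
    intro e f hef
    have hRef := gapFun_mono (c := c) hef
    have hH := H e f
    simp only [R]
    rcases le_or_gt (em e) (em f) with hem | hem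
    · have := gapFun_sub_le (c := c) hem
      omega
    · have hcE : 0 < c ∨ Fintype.card {y // y ∈ E} ≤ 1 := by
        have := Fintype.card_subtype_le (· ∈ E)
        omega
      have := (gapFun_lt_gapFun_iff hcE).2 hem
      omega
  exact ⟨anchorExtend hE m em R, fun x y => anchorExtend_le_iff hR ht,
    anchorExtend_of_mem hR ht⟩

end Reembedding

section Semantics

variable {Va Vb : Type}

lemma csat_congr {σ σ' : ℕ → Va ⊕ Vb → ℤ} (hinl : ∀ i a, σ i (.inl a) = σ' i (.inl a))
    (hinr : ∀ i x y, σ i (.inr x) ≤ σ i (.inr y) ↔ σ' i (.inr x) ≤ σ' i (.inr y))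
    (ψ : CLTL Va Vb) (i : ℕ) : csat σ i ψ ↔ csat σ' i ψ := by
  induction ψ generalizing i with
  | ltL | eqL => simp only [csat, hinl]
  | ltB x y => simp only [csat, ← not_le, hinr]
  | eqB x y => simp only [csat, le_antisymm_iff, hinr]
  | not _ ih | next _ ih => simp only [csat, ih]
  | or _ _ ih₁ ih₂ | untl _ _ ih₁ ih₂ => simp only [csat, ih₁, ih₂]

lemma ssat_congr {ρ ρ' : ℕ → FrameData Va Vb} {k i : ℕ}
    (h : ∀ j, i ≤ j → FrameAgree (k + 1) (ρ j) (ρ' j)) (ψ : CLTL Va Vb) (hψ : xlen ψ ≤ k) :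
    ∀ j, i ≤ j → (ssat ρ j ψ ↔ ssat ρ' j ψ) := by
  induction ψ with
  | ltL i₁ x j₁ y | eqL i₁ x j₁ y =>
    intro j hj
    simp only [xlen, max_le_iff] at hψ
    have hi₁ := Nat.lt_succ_of_le hψ.1
    have hj₁ := Nat.lt_succ_of_le hψ.2
    simp only [ssat, (h j hj).1 (i₁, x) (j₁, y) hi₁ hj₁, (h j hj).1 (j₁, y) (i₁, x) hj₁ hi₁]
  | ltB x y | eqB x y =>
    intro j hj
    simp only [ssat, (h j hj).2 0 k.succ_pos]
  | not ψ ih =>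
    intro j hj
    simp only [ssat, ih hψ j hj]
  | or ψ₁ ψ₂ ih₁ ih₂ =>
    intro j hj
    simp only [xlen, max_le_iff] at hψ
    simp only [ssat, ih₁ hψ.1 j hj, ih₂ hψ.2 j hj]
  | next ψ ih =>
    intro j hj
    simp only [ssat, ih hψ (j + 1) (by omega)]
  | untl ψ₁ ψ₂ ih₁ ih₂ =>
    intro j hj
    simp only [xlen, max_le_iff] at hψ
    simp only [ssat]
    exact exists_congr fun l => and_congr_right fun hl => and_congr (ih₂ hψ.2 l (by omega))
      (forall₃_congr fun n hn _ => ih₁ hψ.1 n (by omega))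

variable [Fintype Vb]

lemma mu_congr {σ σ' : ℕ → Va ⊕ Vb → ℤ} {k i : ℕ} (h : ∀ j ≤ i, σ j = σ' j) :
    mu k σ i = mu k σ' i := by
  have h' : ∀ l, σ (i - min i k + min l (min i k)) = σ' (i - min i k + min l (min i k)) :=
    fun l => h _ (by omega)
  simp only [mu, h']

lemma isFrameAt_mu (s k i : ℕ) (σ : ℕ → Va ⊕ Vb → ℤ) : IsFrameAt s (mu k σ i) :=
  ⟨fun _ _ _ _ => le_total _ _, fun _ _ _ _ _ _ => le_trans, fun _ _ => ⟨_, rfl⟩⟩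

lemma mu_snd_min (k i : ℕ) (σ : ℕ → Va ⊕ Vb → ℤ) :
    (mu k σ i).2 (min i k) = gapFun (Fintype.card Vb - 1) fun b => σ i (.inr b) := by
  simp only [mu, min_self, Nat.sub_add_cancel (min_le_left i k)]

lemma oneStepT_mu (k i : ℕ) (σ : ℕ → Va ⊕ Vb → ℤ) :
    OneStepT k (min (i + 1) (k + 1)) (mu k σ i) (mu k σ (i + 1)) := by
  unfold OneStepT
  split_ifs with h
  · have hidx : ∀ a, a < min (i + 1) (k + 1) →
        i - min i k + min a (min i k) = i + 1 - min (i + 1) k + min a (min (i + 1) k) := by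
      omega
    exact ⟨fun t₁ t₂ h₁ h₂ => by simp only [mu, hidx _ h₁, hidx _ h₂],
      fun j hj => by simp only [mu, hidx _ hj]⟩
  · have hidx : ∀ a, a + 1 < k + 1 →
        i - min i k + min (a + 1) (min i k) = i + 1 - min (i + 1) k + min a (min (i + 1) k) := by
      omega
    exact ⟨fun t₁ t₂ h₁ h₂ => by simp only [mu, hidx _ h₁, hidx _ h₂],
      fun j hj => by simp only [mu, hidx _ hj]⟩

lemma mu_add (k d : ℕ) (σ : ℕ → Va ⊕ Vb → ℤ) :
    mu k σ (k + d) = (fun t₁ t₂ => σ (d + min t₁.1 k) (.inl t₁.2) ≤ σ (d + min t₂.1 k) (.inl t₂.2),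
      fun j => gapFun (Fintype.card Vb - 1) fun b => σ (d + min j k) (.inr b)) := by
  simp only [mu, show min (k + d) k = k by omega, Nat.add_sub_cancel_left]

/-- From position `k` on, the frames of `μ(σ)` see a full window of `k + 1` positions. -/
lemma ssat_mu_add_iff (k : ℕ) (σ : ℕ → Va ⊕ Vb → ℤ) (ψ : CLTL Va Vb) (hψ : xlen ψ ≤ k)
    (d : ℕ) : ssat (mu k σ) (k + d) ψ ↔ csat σ d ψ := by
  have hc : 0 < Fintype.card Vb - 1 ∨ Fintype.card Vb ≤ 1 := by omega
  induction ψ generalizing d with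
  | ltL i₁ x j₁ y =>
    simp only [xlen, max_le_iff] at hψ
    simp only [ssat, csat, mu_add, min_eq_left hψ.1, min_eq_left hψ.2, lt_iff_le_not_ge]
  | eqL i₁ x j₁ y =>
    simp only [xlen, max_le_iff] at hψ
    simp only [ssat, csat, mu_add, min_eq_left hψ.1, min_eq_left hψ.2, le_antisymm_iff]
  | ltB x y => simp only [ssat, csat, mu_add, Nat.zero_min, add_zero, gapFun_lt_gapFun_iff hc]
  | eqB x y => simp only [ssat, csat, mu_add, Nat.zero_min, add_zero, gapFun_inj_iff hc]
  | not ψ ih => simp only [ssat, csat, ih hψ]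
  | or ψ₁ ψ₂ ih₁ ih₂ =>
    simp only [xlen, max_le_iff] at hψ
    simp only [ssat, csat, ih₁ hψ.1, ih₂ hψ.2]
  | next ψ ih => simp only [ssat, csat, ← ih hψ, add_assoc]
  | untl ψ₁ ψ₂ ih₁ ih₂ =>
    simp only [xlen, max_le_iff] at hψ
    simp only [ssat, csat]
    constructor
    · rintro ⟨j, hj, h₂, h₁⟩
      obtain ⟨j, rfl⟩ : ∃ j', j = k + j' := ⟨j - k, by omega⟩
      exact ⟨j, by omega, (ih₂ hψ.2 j).1 h₂,
        fun l hl hlj => (ih₁ hψ.1 l).1 (h₁ (k + l) (by omega) (by omega))⟩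
    · rintro ⟨j, hj, h₂, h₁⟩
      refine ⟨k + j, by omega, (ih₂ hψ.2 j).2 h₂, fun l hl hlj => ?_⟩
      obtain ⟨l, rfl⟩ : ∃ l', l = k + l' := ⟨l - k, by omega⟩
      exact (ih₁ hψ.1 l).2 (h₁ l (by omega) (by omega))

end Semantics

section Paths

variable {α : Type} (π : ℕ → α)

lemma pathNodes_eq (i : ℕ) : pathNodes π i = (List.ofFn fun j : Fin i => π j) ++ [π i] :=
  List.ofFn_succ_last

lemma pathNodes_length (i : ℕ) : (pathNodes π i).length = i + 1 :=
  List.length_ofFn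

lemma pathNodes_take {i j : ℕ} (h : j ≤ i) : (pathNodes π i).take (j + 1) = pathNodes π j := by
  apply List.ext_getElem
  · simp only [List.length_take, pathNodes_length]
    omega
  · intro n _ _
    simp only [pathNodes, List.getElem_take, List.getElem_ofFn]

end Paths

section Trees

variable {Va Vb : Type} {k : ℕ}

lemma frameAgree_refl (s : ℕ) (f : FrameData Va Vb) : FrameAgree s f f :=
  ⟨fun _ _ _ _ => Iff.rfl, fun _ _ => rfl⟩

lemma oneStepT_zero (f g : FrameData Va Vb) : OneStepT k 0 f g := by
  rw [OneStepT, if_pos k.succ_pos]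
  exact ⟨fun _ _ h => absurd h (Nat.not_lt_zero _), fun _ h => absurd h (Nat.not_lt_zero _)⟩

variable [Fintype Vb] {E : Finset Vb}

lemma StrategyTree.gapCompat_pathNodes {T : List (GapFuns Vb E) → FrameData Va Vb}
    (hT : StrategyTree E k T) (π : ℕ → GapFuns Vb E) (i : ℕ) :
    GapCompat (π i) (min (i + 1) (k + 1)) (T (pathNodes π i)) := by
  have h := ((hT (List.ofFn fun j : Fin i => π j)).2 (π i)).2
  rwa [← pathNodes_eq, nsize, pathNodes_length] at h

end Trees

section StrategyToTree

variable {Va Vb : Type} [Fintype Vb] {E : Finset Vb}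

noncomputable def GapFuns.rep (g : GapFuns Vb E) : {x // x ∈ E} → ℤ :=
  g.2.choose

lemma GapFuns.val_eq_gapFun_rep (g : GapFuns Vb E) :
    g.val = gapFun (Fintype.card Vb - 1) g.rep :=
  g.2.choose_spec

noncomputable def playAlong (st : Strat Va Vb E) (η : List (GapFuns Vb E)) :
    List (Va ⊕ Vb → ℤ) :=
  η.foldl (fun h g => h ++ [st h g.rep]) []

noncomputable def lastRound (st : Strat Va Vb E) (η : List (GapFuns Vb E)) : Va ⊕ Vb → ℤ :=
  (playAlong st η).getLastD 0

variable {st : Strat Va Vb E}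

lemma playAlong_append_singleton (η : List (GapFuns Vb E)) (g : GapFuns Vb E) :
    playAlong st (η ++ [g]) = playAlong st η ++ [st (playAlong st η) g.rep] :=
  List.foldl_append

lemma lastRound_append_singleton (η : List (GapFuns Vb E)) (g : GapFuns Vb E) :
    lastRound st (η ++ [g]) = st (playAlong st η) g.rep := by
  rw [lastRound, playAlong_append_singleton, List.getLastD_concat]

lemma playAlong_ofFn (π : ℕ → GapFuns Vb E) (i : ℕ) :
    playAlong st (List.ofFn fun j : Fin i => π j)
      = List.ofFn fun j : Fin i => lastRound st (pathNodes π j) := by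
  induction i with
  | zero => rfl
  | succ i ih =>
    rw [List.ofFn_succ_last, List.ofFn_succ_last, playAlong_append_singleton]
    simp only [Fin.val_castSucc, Fin.val_last, ih, pathNodes_eq, lastRound_append_singleton]

lemma conforms_lastRound (hst : EnvFaithful E st) (π : ℕ → GapFuns Vb E) :
    Conforms E st fun i => lastRound st (pathNodes π i) := by
  intro i
  have hi : lastRound st (pathNodes π i)
      = st (List.ofFn fun j : Fin i => lastRound st (pathNodes π j)) (π i).rep := by
    rw [pathNodes_eq, lastRound_append_singleton, playAlong_ofFn]
  have henv : (fun e : {x // x ∈ E} => lastRound st (pathNodes π i) (.inr e)) = (π i).rep :=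
    funext fun e => by rw [hi]; exact hst _ _ e e.2
  beta_reduce
  rw [henv]
  exact hi

noncomputable def realignRound (E : Finset Vb) (f : Va ⊕ Vb → ℤ) : Va ⊕ Vb → ℤ :=
  Sum.elim (fun a => f (.inl a)) (exists_reembedding_gapFun_sub_eq E fun b => f (.inr b)).choose

lemma realignRound_inr_le_iff (f : Va ⊕ Vb → ℤ) (x y : Vb) :
    realignRound E f (.inr x) ≤ realignRound E f (.inr y) ↔ f (.inr x) ≤ f (.inr y) :=
  (exists_reembedding_gapFun_sub_eq E fun b => f (.inr b)).choose_spec.1 x y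

lemma gapFun_realignRound_sub (f : Va ⊕ Vb → ℤ) (e e' : {x // x ∈ E}) :
    (gapFun (Fintype.card Vb - 1) (fun b => realignRound E f (.inr b)) e' : ℤ)
        - gapFun (Fintype.card Vb - 1) (fun b => realignRound E f (.inr b)) e
      = (gapFun (Fintype.card Vb - 1) (fun e : {x // x ∈ E} => f (.inr e)) e' : ℤ)
        - gapFun (Fintype.card Vb - 1) (fun e : {x // x ∈ E} => f (.inr e)) e :=
  (exists_reembedding_gapFun_sub_eq E fun b => f (.inr b)).choose_spec.2 e e'

variable (st)

noncomputable def treeLabel (η : List (GapFuns Vb E)) : Va ⊕ Vb → ℤ :=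
  realignRound E (lastRound st η)

noncomputable def treeFrame (k : ℕ) (η : List (GapFuns Vb E)) : FrameData Va Vb :=
  mu k (fun j => treeLabel st (η.take (j + 1))) (η.length - 1)

variable {st}

lemma treeFrame_pathNodes (k : ℕ) (π : ℕ → GapFuns Vb E) (i : ℕ) :
    treeFrame st k (pathNodes π i) = mu k (fun j => treeLabel st (pathNodes π j)) i := by
  rw [treeFrame, pathNodes_length, Nat.add_sub_cancel]
  exact mu_congr fun j hj => by rw [pathNodes_take π hj]

lemma strategyTree_treeFrame (hst : EnvFaithful E st) (k : ℕ) :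
    StrategyTree E k (treeFrame st k) := by
  intro η
  refine ⟨isFrameAt_mu _ _ _ _, fun g => ?_⟩
  set σ := fun j => treeLabel st ((η ++ [g]).take (j + 1))
  have hchild : treeFrame st k (η ++ [g]) = mu k σ η.length := by
    simp only [treeFrame, List.length_append, List.length_singleton, Nat.add_sub_cancel, σ]
  refine ⟨?_, fun x y => ?_⟩
  · obtain rfl | ⟨n, hn⟩ : η = [] ∨ ∃ n, η.length = n + 1 := by
      cases η <;> simp
    · exact oneStepT_zero _ _
    have hparent : treeFrame st k η = mu k σ n := by
      rw [treeFrame, hn, Nat.add_sub_cancel]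
      exact mu_congr fun j hj => by
        simp only [σ, List.take_append_of_le_length (by omega : j + 1 ≤ η.length)]
    rw [hparent, hchild, nsize, hn]
    exact oneStepT_mu k n σ
  · have henv : (fun e : {x // x ∈ E} => lastRound st (η ++ [g]) (.inr e)) = g.rep :=
      funext fun e => by rw [lastRound_append_singleton]; exact hst _ _ e e.2
    have hσ : σ η.length = treeLabel st (η ++ [g]) := by
      simp only [σ, show η.length + 1 = (η ++ [g]).length by simp, List.take_length]
    rw [hchild, nsize, List.length_append, List.length_singleton,
      show min (η.length + 1) (k + 1) - 1 = min η.length k by omega, mu_snd_min, hσ, treeLabel,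
      gapFun_realignRound_sub, henv, g.val_eq_gapFun_rep]

variable {φ : CLTL Va Vb} {k : ℕ}

theorem exists_winningStrategyTree (hk : xlen φ ≤ k) (hst : EnvFaithful E st)
    (hwin : ∀ σ, Conforms E st σ → csat σ 0 φ) :
    ∃ T L, WinningStrategyTree E k φ T L := by
  refine ⟨treeFrame st k, treeLabel st, strategyTree_treeFrame hst k, fun π => ⟨fun i => ?_, ?_⟩⟩
  · rw [treeFrame_pathNodes]
    exact frameAgree_refl _ _
  · simp only [treeFrame_pathNodes]
    have hiff := csat_congr (σ := fun i => lastRound st (pathNodes π i))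
      (σ' := fun i => treeLabel st (pathNodes π i)) (fun _ _ => rfl)
      (fun i x y => (realignRound_inr_le_iff _ x y).symm) φ 0
    exact (ssat_mu_add_iff k _ φ hk 0).2 (hiff.1 (hwin _ (conforms_lastRound hst π)))

end StrategyToTree

section TreeToStrategy

variable {Va Vb : Type} [Fintype Vb] {E : Finset Vb}

noncomputable def GapFuns.ofEnv (em : {x // x ∈ E} → ℤ) : GapFuns Vb E :=
  ⟨gapFun (Fintype.card Vb - 1) em, em, rfl⟩

noncomputable def nodeOf (h : List (Va ⊕ Vb → ℤ)) (em : {x // x ∈ E} → ℤ) :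
    List (GapFuns Vb E) :=
  h.map (fun f => GapFuns.ofEnv fun e => f (.inr e)) ++ [GapFuns.ofEnv em]

open Classical in
noncomputable def realignTo (m : Vb → ℤ) (em : {x // x ∈ E} → ℤ) : Vb → ℤ :=
  if H : ∀ e f : {x // x ∈ E},
      (gapFun (Fintype.card Vb - 1) em f : ℤ) - gapFun (Fintype.card Vb - 1) em e
        = (gapFun (Fintype.card Vb - 1) m f : ℤ) - gapFun (Fintype.card Vb - 1) m e then
    (exists_reembedding_eq_on E m em H).choose
  else fun b => if hb : b ∈ E then em ⟨b, hb⟩ else m b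

lemma realignTo_of_mem (m : Vb → ℤ) (em : {x // x ∈ E} → ℤ) (e : {x // x ∈ E}) :
    realignTo m em e = em e := by
  unfold realignTo
  split_ifs with H
  exacts [(exists_reembedding_eq_on E m em H).choose_spec.2 e, dif_pos e.2]

lemma realignTo_le_iff {m : Vb → ℤ} {em : {x // x ∈ E} → ℤ}
    (H : ∀ e f : {x // x ∈ E},
      (gapFun (Fintype.card Vb - 1) em f : ℤ) - gapFun (Fintype.card Vb - 1) em e
        = (gapFun (Fintype.card Vb - 1) m f : ℤ) - gapFun (Fintype.card Vb - 1) m e)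
    (x y : Vb) : realignTo m em x ≤ realignTo m em y ↔ m x ≤ m y := by
  rw [realignTo, dif_pos H]
  exact (exists_reembedding_eq_on E m em H).choose_spec.1 x y

noncomputable def treeStrategy (L : List (GapFuns Vb E) → Va ⊕ Vb → ℤ) : Strat Va Vb E :=
  fun h em => Sum.elim (fun a => L (nodeOf h em) (.inl a))
    (realignTo (fun b => L (nodeOf h em) (.inr b)) em)

lemma envFaithful_treeStrategy (L : List (GapFuns Vb E) → Va ⊕ Vb → ℤ) :
    EnvFaithful E (treeStrategy L) :=
  fun _ em x hx => realignTo_of_mem _ em ⟨x, hx⟩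

variable {φ : CLTL Va Vb} {k : ℕ}

theorem WinningStrategyTree.exists_winning (hk : xlen φ ≤ k)
    {T : List (GapFuns Vb E) → FrameData Va Vb} {L : List (GapFuns Vb E) → Va ⊕ Vb → ℤ}
    (hTL : WinningStrategyTree E k φ T L) :
    ∃ st, EnvFaithful E st ∧ ∀ σ, Conforms E st σ → csat σ 0 φ := by
  obtain ⟨hT, hwin⟩ := hTL
  refine ⟨treeStrategy L, envFaithful_treeStrategy L, fun σ hσ => ?_⟩
  set π : ℕ → GapFuns Vb E := fun i => GapFuns.ofEnv fun e => σ i (.inr e)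
  have hround : ∀ i, σ i = Sum.elim (fun a => L (pathNodes π i) (.inl a))
      (realignTo (fun b => L (pathNodes π i) (.inr b)) fun e : {x // x ∈ E} => σ i (.inr e)) := by
    intro i
    have hnode : nodeOf (List.ofFn fun j : Fin i => σ j) (fun e => σ i (.inr e))
        = pathNodes π i := by
      rw [nodeOf, List.map_ofFn, pathNodes_eq]
      rfl
    exact (hσ i).trans (by rw [treeStrategy, hnode])
  obtain ⟨hagree, hsat⟩ := hwin π
  have hgaps : ∀ i (e f : {x // x ∈ E}),
      (gapFun (Fintype.card Vb - 1) (fun e : {x // x ∈ E} => σ i (.inr e)) f : ℤ)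
        - gapFun (Fintype.card Vb - 1) (fun e : {x // x ∈ E} => σ i (.inr e)) e
      = (gapFun (Fintype.card Vb - 1) (fun b => L (pathNodes π i) (.inr b)) f : ℤ)
        - gapFun (Fintype.card Vb - 1) (fun b => L (pathNodes π i) (.inr b)) e := by
    intro i e f
    have h := hT.gapCompat_pathNodes π i f e
    rwa [show min (i + 1) (k + 1) - 1 = min i k by omega, (hagree i).2 _ (by omega),
      mu_snd_min] at h
  have hiff := csat_congr (σ := σ) (σ' := fun i => L (pathNodes π i))
    (fun i a => by rw [hround i]; rfl)
    (fun i x y => by rw [hround i]; exact realignTo_le_iff (hgaps i) x y) φ 0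
  refine hiff.2 ((ssat_mu_add_iff k _ φ hk 0).1 ?_)
  refine (ssat_congr (fun j hj => ?_) φ hk k le_rfl).1 hsat
  simpa only [show min (j + 1) (k + 1) = k + 1 by omega] using hagree j

end TreeToStrategy

/-- for a single-sided CLTL game over `(ℤ, <, =)` (the environment owns only
future-blind variables `E ⊆ V^b`) with winning condition a CLTL formula `φ` of `X`-length
(at most) `k`, the system has a winning strategy iff there exists a winning strategy tree. -/
theorem stmt8 {Va Vb : Type} [Fintype Vb] (E : Finset Vb)
    (φ : CLTL Va Vb) (k : ℕ) (hk : xlen φ ≤ k) :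
    (∃ st : Strat Va Vb E, EnvFaithful E st ∧
        ∀ σ : ℕ → Va ⊕ Vb → ℤ, Conforms E st σ → csat σ 0 φ) ↔
    (∃ (T : List (GapFuns Vb E) → FrameData Va Vb)
        (L : List (GapFuns Vb E) → (Va ⊕ Vb → ℤ)),
        WinningStrategyTree E k φ T L) :=
  ⟨fun ⟨_, hst, hwin⟩ => exists_winningStrategyTree hk hst hwin,
    fun ⟨_, _, hTL⟩ => hTL.exists_winning hk⟩
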